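/- arXiv:1404.6673 — 4 statements merged into one kernel-verified Lean document; each statement's English description precedes it below -/
import Mathlib

section
/- Let A = (n, Σ, M, α, η) be an ℝ-weighted automaton and let (F, M̃) be a forward reduction of A, i.e., F ∈ ℝ^{n̂×n} is a matrix whose rows form a basis of the forward space of A and F M(a) = M̃(a) F holds for all a ∈ Σ. Let α̃ ∈ ℝ^{n̂} be a row vector with α = α̃ F, and let A^F = (n̂, Σ, M̃, α̃, F η) be the forward WA of A with base F. Then L_A(w) = L_{A^F}(w) for every word w ∈ Σ*. -/
open Matrix

noncomputable section

/-- The matrix `M(w)` of a word: `M(ε) = I`, `M(a₁⋯a_k) = M(a₁)⋯M(a_k)`. -/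
def wordProd {S : Type*} {Γ : Type*} [Fintype S] [DecidableEq S]
    (M : Γ → Matrix S S ℝ) (w : List Γ) : Matrix S S ℝ :=
  (w.map M).prod

/-- The language of the weighted automaton `(M, α, η)`: `L(w) = α M(w) η`. -/
def WAlang {S : Type*} {Γ : Type*} [Fintype S] [DecidableEq S]
    (M : Γ → Matrix S S ℝ) (α η : S → ℝ) (w : List Γ) : ℝ :=
  α ⬝ᵥ (wordProd M w).mulVec η

lemma F_wordProd {Γ : Type*} {n nh : ℕ}
    (M : Γ → Matrix (Fin n) (Fin n) ℝ)
    (Mt : Γ → Matrix (Fin nh) (Fin nh) ℝ) (F : Matrix (Fin nh) (Fin n) ℝ)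
    (hcomm : ∀ a, F * M a = Mt a * F) :
    ∀ w : List Γ, F * wordProd M w = wordProd Mt w * F := by
  intro w
  induction w with
  | nil => simp [wordProd]
  | cons a w ih =>
    simp only [wordProd, List.map_cons, List.prod_cons] at *
    rw [← Matrix.mul_assoc, hcomm a, Matrix.mul_assoc, ih, ← Matrix.mul_assoc]

/-- a forward WA of a WA is equivalent to it. -/
theorem forwardWA_equivalent {Γ : Type*} {n nh : ℕ}
    (M : Γ → Matrix (Fin n) (Fin n) ℝ) (α η : Fin n → ℝ)
    (Mt : Γ → Matrix (Fin nh) (Fin nh) ℝ) (F : Matrix (Fin nh) (Fin n) ℝ)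
    (αt : Fin nh → ℝ)
    -- the rows of `F` form a basis of the forward space of `A`
    (hind : LinearIndependent ℝ (fun i => F i))
    (hspan : Submodule.span ℝ (Set.range (fun i => F i)) =
      Submodule.span ℝ {x : Fin n → ℝ | ∃ w : List Γ, x = Matrix.vecMul α (wordProd M w)})
    -- `F M(a) = M̃(a) F` for all letters `a`
    (hcomm : ∀ a, F * M a = Mt a * F)
    -- `α = α̃ F`
    (hα : α = Matrix.vecMul αt F) :
    ∀ w : List Γ, WAlang M α η w = WAlang Mt αt (F.mulVec η) w := by
  intro w
  unfold WAlang
  rw [hα, ← Matrix.dotProduct_mulVec, Matrix.mulVec_mulVec, Matrix.mulVec_mulVec,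
    F_wordProd M Mt F hcomm w]
end
end

section
/- Let A be an ℝ-weighted automaton, let A^B be a backward WA of A with base B (where the columns of B form a basis of the backward space of A), and let A' = A^{BF} be a forward WA of A^B with base F̃ (where the rows of F̃ form a basis of the forward space of A^B). Then A' is equivalent to A and A' is minimal, i.e., every WA equivalent to A has size at least the size of A'. The same conclusion holds for A' = A^{FB}, obtained by first taking a forward WA of A and then a backward WA of it. -/
open Matrix

noncomputable section

/-- `(Mt, αt, ηt)` is a forward WA of `(M, α, η)` with base `F`:
the rows of `F` form a basis of the forward space, `F M(a) = M̃(a) F`,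
`α = α̃ F`, and the final vector of the forward WA is `F η`. -/
def IsForwardWAOf {Γ : Type*} {n nh : ℕ}
    (M : Γ → Matrix (Fin n) (Fin n) ℝ) (α η : Fin n → ℝ)
    (Mt : Γ → Matrix (Fin nh) (Fin nh) ℝ) (αt ηt : Fin nh → ℝ)
    (F : Matrix (Fin nh) (Fin n) ℝ) : Prop :=
  LinearIndependent ℝ (fun i => F i) ∧
  Submodule.span ℝ (Set.range (fun i => F i)) =
    Submodule.span ℝ {x : Fin n → ℝ | ∃ w : List Γ, x = Matrix.vecMul α (wordProd M w)} ∧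
  (∀ a, F * M a = Mt a * F) ∧
  α = Matrix.vecMul αt F ∧
  ηt = F.mulVec η

/-- `(Mh, αh, ηh)` is a backward WA of `(M, α, η)` with base `B`:
the columns of `B` form a basis of the backward space, `M(a) B = B M̂(a)`,
`η = B η̂`, and the initial vector of the backward WA is `α B`. -/
def IsBackwardWAOf {Γ : Type*} {n nh : ℕ}
    (M : Γ → Matrix (Fin n) (Fin n) ℝ) (α η : Fin n → ℝ)
    (Mh : Γ → Matrix (Fin nh) (Fin nh) ℝ) (αh ηh : Fin nh → ℝ)
    (B : Matrix (Fin n) (Fin nh) ℝ) : Prop :=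
  LinearIndependent ℝ (fun j => Bᵀ j) ∧
  Submodule.span ℝ (Set.range (fun j => Bᵀ j)) =
    Submodule.span ℝ {x : Fin n → ℝ | ∃ w : List Γ, x = (wordProd M w).mulVec η} ∧
  (∀ a, M a * B = B * Mh a) ∧
  αh = Matrix.vecMul α B ∧
  η = B.mulVec ηh

/-!
The Hankel map `c ↦ (v ↦ ∑ᵤ c(u) L(uv))` of a language factors through the state space of every
weighted automaton recognising it, as "initial vectors reached by words" followed by "weights
of suffixes". Its rank therefore bounds the size of every equivalent automaton from below, and
equals the size of any automaton whose forward and backward spaces are both the whole space.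
A backward reduction makes the backward space full and a forward reduction the forward space;
each also preserves fullness of the other space, since it maps it onto the new one by a
surjective linear map. So `A^{BF}` and `A^{FB}` have both spaces full.
-/

section WordProd

variable {Γ S T : Type*} [Fintype S] [DecidableEq S] [Fintype T] [DecidableEq T]

@[simp]
lemma wordProd_nil (M : Γ → Matrix S S ℝ) : wordProd M [] = 1 := rfl

lemma wordProd_cons (M : Γ → Matrix S S ℝ) (a : Γ) (w : List Γ) :
    wordProd M (a :: w) = M a * wordProd M w := by
  simp [wordProd]

lemma wordProd_append (M : Γ → Matrix S S ℝ) (u v : List Γ) :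
    wordProd M (u ++ v) = wordProd M u * wordProd M v := by
  simp [wordProd]

lemma mul_wordProd_of_intertwines {M : Γ → Matrix S S ℝ} {N : Γ → Matrix T T ℝ}
    {F : Matrix T S ℝ} (h : ∀ a, F * M a = N a * F) (w : List Γ) :
    F * wordProd M w = wordProd N w * F := by
  induction w with
  | nil => simp
  | cons a w ih =>
    rw [wordProd_cons, wordProd_cons, ← Matrix.mul_assoc, h, Matrix.mul_assoc, ih,
      Matrix.mul_assoc]

lemma walang_append (M : Γ → Matrix S S ℝ) (α η : S → ℝ) (u v : List Γ) :
    WAlang M α η (u ++ v) = (α ᵥ* wordProd M u) ⬝ᵥ (wordProd M v *ᵥ η) := by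
  rw [WAlang, wordProd_append, ← Matrix.mulVec_mulVec, Matrix.dotProduct_mulVec]

end WordProd

section Surjective

variable {K m n : Type*} [Field K] [Fintype m] [Fintype n]

lemma Matrix.mulVec_surjective_of_linearIndependent_rows {A : Matrix m n K}
    (h : LinearIndependent K A.row) : Function.Surjective A.mulVec := by
  have hrange : LinearMap.range A.mulVecLin = ⊤ := Submodule.eq_top_of_finrank_eq <| by
    rw [Module.finrank_fintype_fun_eq_card]
    exact h.rank_matrix
  exact LinearMap.range_eq_top.mp hrange

lemma Matrix.vecMul_surjective_of_linearIndependent_cols {A : Matrix m n K}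
    (h : LinearIndependent K A.col) : Function.Surjective (· ᵥ* A) := by
  have h' := Matrix.mulVec_surjective_of_linearIndependent_rows (A := Aᵀ) (by simpa using h)
  rwa [show Aᵀ.mulVec = (· ᵥ* A) from funext (Matrix.mulVec_transpose A)] at h'

end Surjective

section Spaces

variable {Γ S T : Type*} [Fintype S] [DecidableEq S] [Fintype T] [DecidableEq T]

def forwardSpace (M : Γ → Matrix S S ℝ) (α : S → ℝ) : Submodule ℝ (S → ℝ) :=
  Submodule.span ℝ (Set.range fun w => α ᵥ* wordProd M w)

def backwardSpace (M : Γ → Matrix S S ℝ) (η : S → ℝ) : Submodule ℝ (S → ℝ) :=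
  Submodule.span ℝ (Set.range fun w => wordProd M w *ᵥ η)

lemma forwardSpace_eq_span_setOf (M : Γ → Matrix S S ℝ) (α : S → ℝ) :
    forwardSpace M α = Submodule.span ℝ {x | ∃ w : List Γ, x = α ᵥ* wordProd M w} := by
  simp only [forwardSpace, Set.range, eq_comm]

lemma backwardSpace_eq_span_setOf (M : Γ → Matrix S S ℝ) (η : S → ℝ) :
    backwardSpace M η = Submodule.span ℝ {x | ∃ w : List Γ, x = wordProd M w *ᵥ η} := by
  simp only [backwardSpace, Set.range, eq_comm]

lemma map_vecMulLinear_forwardSpace {M : Γ → Matrix S S ℝ} {N : Γ → Matrix T T ℝ}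
    {F : Matrix T S ℝ} (h : ∀ a, F * M a = N a * F) (β : T → ℝ) :
    (forwardSpace N β).map F.vecMulLinear = forwardSpace M (β ᵥ* F) := by
  rw [forwardSpace, Submodule.map_span, ← Set.range_comp]
  congr 2 with w : 1
  simp [Matrix.vecMul_vecMul, mul_wordProd_of_intertwines h]

lemma map_mulVecLin_backwardSpace {M : Γ → Matrix S S ℝ} {N : Γ → Matrix T T ℝ}
    {F : Matrix T S ℝ} (h : ∀ a, F * M a = N a * F) (η : S → ℝ) :
    (backwardSpace M η).map F.mulVecLin = backwardSpace N (F *ᵥ η) := by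
  rw [backwardSpace, Submodule.map_span, ← Set.range_comp]
  congr 2 with w : 1
  simp [Matrix.mulVec_mulVec, mul_wordProd_of_intertwines h]

end Spaces

section Reductions

variable {Γ : Type*} {n nh : ℕ} {M : Γ → Matrix (Fin n) (Fin n) ℝ} {α η : Fin n → ℝ}

namespace IsForwardWAOf

variable {Mt : Γ → Matrix (Fin nh) (Fin nh) ℝ} {αt ηt : Fin nh → ℝ} {F : Matrix (Fin nh) (Fin n) ℝ}

lemma walang_eq (hF : IsForwardWAOf M α η Mt αt ηt F) (w : List Γ) :
    WAlang Mt αt ηt w = WAlang M α η w := by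
  obtain ⟨-, -, hc, hα, hη⟩ := hF
  rw [WAlang, WAlang, hα, hη, Matrix.mulVec_mulVec, ← mul_wordProd_of_intertwines hc,
    ← Matrix.mulVec_mulVec, Matrix.dotProduct_mulVec, Matrix.dotProduct_mulVec,
    Matrix.vecMul_vecMul]

lemma forwardSpace_eq_top (hF : IsForwardWAOf M α η Mt αt ηt F) : forwardSpace Mt αt = ⊤ := by
  obtain ⟨hli, hspan, hc, hα, -⟩ := hF
  refine Submodule.map_injective_of_injective (f := F.vecMulLinear)
    (Matrix.vecMul_injective_iff.mpr hli) ?_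
  rw [map_vecMulLinear_forwardSpace hc, ← hα, Submodule.map_top, range_vecMulLinear,
    forwardSpace_eq_span_setOf, ← hspan]
  rfl

lemma backwardSpace_eq_top (hF : IsForwardWAOf M α η Mt αt ηt F) (h : backwardSpace M η = ⊤) :
    backwardSpace Mt ηt = ⊤ := by
  obtain ⟨hli, -, hc, -, hη⟩ := hF
  rw [hη, ← map_mulVecLin_backwardSpace hc, h, Submodule.map_top, LinearMap.range_eq_top]
  exact Matrix.mulVec_surjective_of_linearIndependent_rows hli

end IsForwardWAOf

namespace IsBackwardWAOf

variable {Mh : Γ → Matrix (Fin nh) (Fin nh) ℝ} {αh ηh : Fin nh → ℝ} {B : Matrix (Fin n) (Fin nh) ℝ}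

lemma walang_eq (hB : IsBackwardWAOf M α η Mh αh ηh B) (w : List Γ) :
    WAlang Mh αh ηh w = WAlang M α η w := by
  obtain ⟨-, -, hc, hα, hη⟩ := hB
  rw [WAlang, WAlang, hα, hη, Matrix.mulVec_mulVec,
    ← mul_wordProd_of_intertwines (fun a => (hc a).symm), ← Matrix.mulVec_mulVec]
  exact (Matrix.dotProduct_mulVec _ _ _).symm

lemma backwardSpace_eq_top (hB : IsBackwardWAOf M α η Mh αh ηh B) : backwardSpace Mh ηh = ⊤ := by
  obtain ⟨hli, hspan, hc, -, hη⟩ := hB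
  have hc' : ∀ a, B * Mh a = M a * B := fun a => (hc a).symm
  refine Submodule.map_injective_of_injective (f := B.mulVecLin)
    (Matrix.mulVec_injective_iff.mpr hli) ?_
  rw [map_mulVecLin_backwardSpace hc', ← hη, Submodule.map_top, Matrix.range_mulVecLin,
    backwardSpace_eq_span_setOf, ← hspan]
  rfl

lemma forwardSpace_eq_top (hB : IsBackwardWAOf M α η Mh αh ηh B) (h : forwardSpace M α = ⊤) :
    forwardSpace Mh αh = ⊤ := by
  obtain ⟨hli, -, hc, hα, -⟩ := hB
  have hc' : ∀ a, B * Mh a = M a * B := fun a => (hc a).symm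
  rw [hα, ← map_vecMulLinear_forwardSpace hc', h, Submodule.map_top, LinearMap.range_eq_top]
  exact Matrix.vecMul_surjective_of_linearIndependent_cols hli

end IsBackwardWAOf

end Reductions

section Hankel

variable {Γ S T : Type*} [Fintype S] [DecidableEq S] [Fintype T] [DecidableEq T]

def forwardMap (M : Γ → Matrix S S ℝ) (α : S → ℝ) : (List Γ →₀ ℝ) →ₗ[ℝ] S → ℝ :=
  Finsupp.linearCombination ℝ fun w => α ᵥ* wordProd M w

def backwardMap (M : Γ → Matrix S S ℝ) (η : S → ℝ) : (S → ℝ) →ₗ[ℝ] List Γ → ℝ :=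
  (Matrix.of fun w => wordProd M w *ᵥ η).mulVecLin

lemma backwardMap_apply (M : Γ → Matrix S S ℝ) (η x : S → ℝ) (v : List Γ) :
    backwardMap M η x v = (wordProd M v *ᵥ η) ⬝ᵥ x :=
  rfl

lemma range_forwardMap (M : Γ → Matrix S S ℝ) (α : S → ℝ) :
    LinearMap.range (forwardMap M α) = forwardSpace M α :=
  Finsupp.range_linearCombination _

lemma backwardMap_injective {M : Γ → Matrix S S ℝ} {η : S → ℝ} (h : backwardSpace M η = ⊤) :
    Function.Injective (backwardMap M η) := by
  refine (injective_iff_map_eq_zero _).mpr fun x hx => ?_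
  have hker : backwardSpace M η ≤ LinearMap.ker ((dotProductBilin ℝ ℝ).flip x) := by
    refine Submodule.span_le.mpr ?_
    rintro _ ⟨w, rfl⟩
    exact congrFun hx w
  have hxx : x ⬝ᵥ x = 0 := hker (h ▸ Submodule.mem_top)
  exact dotProduct_self_eq_zero.mp hxx

lemma backwardMap_forwardMap_single (M : Γ → Matrix S S ℝ) (α η : S → ℝ) (u : List Γ) (c : ℝ)
    (v : List Γ) :
    backwardMap M η (forwardMap M α (Finsupp.single u c)) v = c * WAlang M α η (u ++ v) := by
  rw [backwardMap_apply, forwardMap, Finsupp.linearCombination_single, dotProduct_smul,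
    walang_append, dotProduct_comm, smul_eq_mul]

lemma backwardMap_comp_forwardMap_eq {M : Γ → Matrix S S ℝ} {α η : S → ℝ}
    {N : Γ → Matrix T T ℝ} {β θ : T → ℝ} (heq : ∀ w, WAlang N β θ w = WAlang M α η w) :
    backwardMap N θ ∘ₗ forwardMap N β = backwardMap M η ∘ₗ forwardMap M α :=
  Finsupp.lhom_ext fun u c => funext fun v => by
    simp only [LinearMap.comp_apply, backwardMap_forwardMap_single, heq]

theorem card_le_of_walang_eq {M : Γ → Matrix S S ℝ} {α η : S → ℝ}
    (hf : forwardSpace M α = ⊤) (hb : backwardSpace M η = ⊤)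
    {N : Γ → Matrix T T ℝ} {β θ : T → ℝ} (heq : ∀ w, WAlang N β θ w = WAlang M α η w) :
    Fintype.card S ≤ Fintype.card T := by
  calc Fintype.card S
      = Module.finrank ℝ (LinearMap.range (backwardMap M η ∘ₗ forwardMap M α)) := by
        rw [LinearMap.range_comp_of_range_eq_top _ ((range_forwardMap M α).trans hf),
          LinearMap.finrank_range_of_inj (backwardMap_injective hb),
          Module.finrank_fintype_fun_eq_card]
    _ = Module.finrank ℝ (LinearMap.range (backwardMap N θ ∘ₗ forwardMap N β)) := by
        rw [backwardMap_comp_forwardMap_eq heq]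
    _ ≤ Module.finrank ℝ (LinearMap.range (backwardMap N θ)) :=
        Submodule.finrank_mono (LinearMap.range_comp_le_range _ _)
    _ ≤ Fintype.card T :=
        (LinearMap.finrank_range_le _).trans (Module.finrank_fintype_fun_eq_card ℝ).le

end Hankel

/-- the WA `A' = A^{BF}` (or `A' = A^{FB}`) is equivalent to `A`
and minimal: every WA equivalent to `A` has at least as many states as `A'`. -/
theorem forward_backward_minimal {Γ : Type*} {n n' : ℕ}
    (M : Γ → Matrix (Fin n) (Fin n) ℝ) (α η : Fin n → ℝ)
    (M' : Γ → Matrix (Fin n') (Fin n') ℝ) (α' η' : Fin n' → ℝ)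
    (h :
      (∃ (nb : ℕ) (Mb : Γ → Matrix (Fin nb) (Fin nb) ℝ) (αb ηb : Fin nb → ℝ)
          (B : Matrix (Fin n) (Fin nb) ℝ) (F : Matrix (Fin n') (Fin nb) ℝ),
          IsBackwardWAOf M α η Mb αb ηb B ∧ IsForwardWAOf Mb αb ηb M' α' η' F) ∨
      (∃ (nf : ℕ) (Mf : Γ → Matrix (Fin nf) (Fin nf) ℝ) (αf ηf : Fin nf → ℝ)
          (F : Matrix (Fin nf) (Fin n) ℝ) (B : Matrix (Fin nf) (Fin n') ℝ),
          IsForwardWAOf M α η Mf αf ηf F ∧ IsBackwardWAOf Mf αf ηf M' α' η' B)) :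
    (∀ w : List Γ, WAlang M' α' η' w = WAlang M α η w) ∧
    (∀ (n'' : ℕ) (M'' : Γ → Matrix (Fin n'') (Fin n'') ℝ) (α'' η'' : Fin n'' → ℝ),
      (∀ w : List Γ, WAlang M'' α'' η'' w = WAlang M α η w) → n' ≤ n'') := by
  obtain ⟨hlang, hfwd, hbwd⟩ : (∀ w, WAlang M' α' η' w = WAlang M α η w) ∧
      forwardSpace M' α' = ⊤ ∧ backwardSpace M' η' = ⊤ := by
    rcases h with ⟨_, _, _, _, _, _, hB, hF⟩ | ⟨_, _, _, _, _, _, hF, hB⟩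
    · exact ⟨fun w => (hF.walang_eq w).trans (hB.walang_eq w), hF.forwardSpace_eq_top,
        hF.backwardSpace_eq_top hB.backwardSpace_eq_top⟩
    · exact ⟨fun w => (hB.walang_eq w).trans (hF.walang_eq w),
        hB.forwardSpace_eq_top hF.forwardSpace_eq_top, hB.backwardSpace_eq_top⟩
  refine ⟨hlang, fun n'' M'' α'' η'' heq => ?_⟩
  simpa using card_le_of_walang_eq hfwd hbwd fun w => (heq w).trans (hlang w).symm
end
end

section
/- Let d, k ∈ ℕ, let P = {p₁, …, p_k} ⊆ [0,1]^d with p₁ = (0,…,0), and let ℓ ≥ 1. Let Σ = {a₂, …, a_k} ∪ {b₁, …, b_d} and let A = (k+1, Σ, M, α, η) be the PA with M(a_i)[1,i] = 1 and M(b_s)[i,k+1] = p_i[s] for all i ∈ {2,…,k} and s ∈ {1,…,d}, all other entries of all M(·) equal to 0, α = e(1), and η = e(k+1)ᵀ. Then there exists a set Q = {q₁, …, q_ℓ} ⊆ [0,1]^d of at most ℓ points with P ⊆ conv(Q) if and only if there exists a PA A' = (ℓ+1, Σ, M', α', η') equivalent to A. -/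
open Matrix

noncomputable section

/-- The transition matrices of the PA built from the points `p₁, …, p_k`
(indexed by `Fin k`, where `p 0` is the origin). The states are
`Option (Fin k)`: `some 0` is the initial state (paper state `1`),
`some i` for `i ≠ 0` are the middle states (paper states `2, …, k`), and
`none` is the final state (paper state `k+1`). The letters are
`a_i` (`Sum.inl i` with `i ≠ 0`) and `b_s` (`Sum.inr s`):
`M(a_i)[1,i] = 1`, `M(b_s)[i,k+1] = p_i[s]`, all other entries `0`
(here `p 0 = 0`, so letting the `b_s`-entry from the initial state be
`p 0 s` agrees with the paper's automaton). -/
def cubeM (k d : ℕ) [NeZero k] (p : Fin k → Fin d → ℝ) :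
    ({j : Fin k // j ≠ 0} ⊕ Fin d) → Matrix (Option (Fin k)) (Option (Fin k)) ℝ
  | Sum.inl j => Matrix.of fun r c => if r = some 0 ∧ c = some j.1 then 1 else 0
  | Sum.inr s => Matrix.of fun r c => if c = none then r.elim 0 (fun i => p i s) else 0

section hlp
variable {S : Type*} {Γ : Type*} [Fintype S] [DecidableEq S]
  (M : Γ → Matrix S S ℝ) (α η : S → ℝ)

lemma WAlang_nil : WAlang M α η [] = α ⬝ᵥ η := by
  simp [WAlang, wordProd]

lemma WAlang_cons (a : Γ) (w : List Γ) :
    WAlang M α η (a :: w) = WAlang M (α ᵥ* M a) η w := by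
  simp only [WAlang, wordProd, List.map_cons, List.prod_cons]
  rw [← Matrix.mulVec_mulVec, Matrix.dotProduct_mulVec]

lemma WAlang_zero (w : List Γ) : WAlang M 0 η w = 0 := by
  simp [WAlang]

lemma WAlang_smul (c : ℝ) (w : List Γ) :
    WAlang M (c • α) η w = c * WAlang M α η w := by
  simp [WAlang, smul_dotProduct]

lemma aux_mem {n : ℕ} {E : Type*} [AddCommGroup E] [Module ℝ E]
    (q : Fin n → E) (w : Fin n → ℝ) (h0 : ∀ j, 0 ≤ w j) (h1 : ∑ j, w j = 1) :
    (∑ j, w j • q j) ∈ convexHull ℝ (Set.range q) := by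
  have := Finset.univ.centerMass_mem_convexHull (w := w) (z := q)
    (fun i _ => h0 i) (by rw [h1]; norm_num) (fun i _ => Set.mem_range_self i)
  rwa [Finset.centerMass_eq_of_sum_1 _ _ h1] at this

lemma aux_extract {n : ℕ} {E : Type*} [AddCommGroup E] [Module ℝ E]
    (q : Fin n → E) {x : E} (hx : x ∈ convexHull ℝ (Set.range q)) :
    ∃ w : Fin n → ℝ, (∀ j, 0 ≤ w j) ∧ ∑ j, w j = 1 ∧ ∑ j, w j • q j = x := by
  rw [convexHull_range_eq_exists_affineCombination] at hx
  obtain ⟨s, w, h0, h1, hc⟩ := hx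
  refine ⟨fun j => if j ∈ s then w j else 0, fun j => ?_, ?_, ?_⟩
  · dsimp only
    split
    · exact h0 _ ‹_›
    · exact le_rfl
  · simp only
    rw [Finset.sum_ite_mem, Finset.univ_inter, h1]
  · rw [Finset.affineCombination_eq_linear_combination s q w h1] at hc
    rw [← hc]
    simp only [ite_smul, zero_smul]
    rw [Finset.sum_ite_mem, Finset.univ_inter]
end hlp

section cube
variable {k d : ℕ} [NeZero k] (p : Fin k → Fin d → ℝ)

lemma cube_v1 (i : {j : Fin k // j ≠ 0}) :
    (fun r => if r = some 0 then (1:ℝ) else 0) ᵥ* cubeM k d p (Sum.inl i)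
      = fun c => if c = some i.1 then 1 else 0 := by
  funext c
  simp [Matrix.vecMul, dotProduct, cubeM, ite_and, Finset.sum_ite_eq]

lemma cube_v2 (s : Fin d) :
    (fun r => if r = some 0 then (1:ℝ) else 0) ᵥ* cubeM k d p (Sum.inr s)
      = (p 0 s) • ((fun c => if c = none then (1:ℝ) else 0) : Option (Fin k) → ℝ) := by
  funext c
  simp [Matrix.vecMul, dotProduct, cubeM, Finset.sum_ite_eq, mul_comm]

lemma cube_v3 (i i' : {j : Fin k // j ≠ 0}) :
    ((fun c => if c = some i.1 then (1:ℝ) else 0) : Option (Fin k) → ℝ) ᵥ* cubeM k d p (Sum.inl i')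
      = 0 := by
  funext c
  simp only [Matrix.vecMul, dotProduct, cubeM, Matrix.of_apply, ite_and, ite_mul, one_mul,
    zero_mul, mul_ite, mul_one, mul_zero, Pi.zero_apply]
  rw [Finset.sum_eq_zero]
  intro r _
  by_cases h1 : r = some i.1 <;> by_cases h2 : r = some 0 <;> simp_all
  exact absurd h1.symm i.2

lemma cube_v4 (i : {j : Fin k // j ≠ 0}) (s : Fin d) :
    ((fun c => if c = some i.1 then (1:ℝ) else 0) : Option (Fin k) → ℝ) ᵥ* cubeM k d p (Sum.inr s)
      = (p i.1 s) • ((fun c => if c = none then (1:ℝ) else 0) : Option (Fin k) → ℝ) := by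
  funext c
  simp [Matrix.vecMul, dotProduct, cubeM, Finset.sum_ite_eq, mul_comm]

lemma cube_v5 (a : {j : Fin k // j ≠ 0} ⊕ Fin d) :
    ((fun c => if c = none then (1:ℝ) else 0) : Option (Fin k) → ℝ) ᵥ* cubeM k d p a = 0 := by
  funext c
  cases a <;>
  · simp only [Matrix.vecMul, dotProduct, cubeM, Matrix.of_apply, ite_and, ite_mul, one_mul,
      zero_mul, mul_ite, mul_one, mul_zero, Pi.zero_apply]
    rw [Finset.sum_eq_zero]
    intro r _
    by_cases h1 : r = none <;> simp_all

end cube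

lemma dot_ind {n : Type*} [Fintype n] [DecidableEq n] (x : n → ℝ) (b : n) :
    x ⬝ᵥ (fun r => if r = b then 1 else 0) = x b := by
  simp [dotProduct]

/-- extension of weights to `Fin (ℓ+1)`, zeroed at `j0` and at `last`. -/
def lamE (ℓ : ℕ) (lam : Fin ℓ → ℝ) (j0 : Fin ℓ) : Fin (ℓ+1) → ℝ :=
  fun c => if h : (c:ℕ) < ℓ then (if (⟨c,h⟩:Fin ℓ) = j0 then 0 else lam ⟨c,h⟩) else 0

def qE (ℓ : ℕ) {d : ℕ} (q : Fin ℓ → Fin d → ℝ) : Fin (ℓ+1) → Fin d → ℝ :=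
  fun c s => if h : (c:ℕ) < ℓ then q ⟨c,h⟩ s else 0

lemma lamE_castSucc {ℓ} (lam : Fin ℓ → ℝ) (j0 j : Fin ℓ) :
    lamE ℓ lam j0 j.castSucc = if j = j0 then 0 else lam j := by
  simp [lamE, j.isLt, Fin.eta]

lemma lamE_last {ℓ} (lam : Fin ℓ → ℝ) (j0 : Fin ℓ) : lamE ℓ lam j0 (Fin.last ℓ) = 0 := by
  simp [lamE]

lemma qE_castSucc {ℓ d} (q : Fin ℓ → Fin d → ℝ) (j : Fin ℓ) (s : Fin d) :
    qE ℓ q j.castSucc s = q j s := by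
  simp [qE, j.isLt, Fin.eta]

lemma qE_last {ℓ d} (q : Fin ℓ → Fin d → ℝ) (s : Fin d) : qE ℓ q (Fin.last ℓ) s = 0 := by
  simp [qE]

def fwdM (ℓ : ℕ) {k d : ℕ} [NeZero k] (lam : {j : Fin k // j ≠ 0} → Fin ℓ → ℝ)
    (q : Fin ℓ → Fin d → ℝ) (j0 : Fin ℓ) :
    ({j : Fin k // j ≠ 0} ⊕ Fin d) → Matrix (Fin (ℓ+1)) (Fin (ℓ+1)) ℝ
  | Sum.inl i => Matrix.of fun r c => if r = j0.castSucc then lamE ℓ (lam i) j0 c else 0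
  | Sum.inr s => Matrix.of fun r c => if c = Fin.last ℓ then qE ℓ q r s else 0

section fwd
variable {ℓ k d : ℕ} [NeZero k] (lam : {j : Fin k // j ≠ 0} → Fin ℓ → ℝ)
  (q : Fin ℓ → Fin d → ℝ) (j0 : Fin ℓ)

lemma fwd_v1 (i : {j : Fin k // j ≠ 0}) :
    (fun r => if r = j0.castSucc then (1:ℝ) else 0) ᵥ* fwdM ℓ lam q j0 (Sum.inl i)
      = lamE ℓ (lam i) j0 := by
  funext c
  simp [Matrix.vecMul, dotProduct, fwdM, ite_mul, Finset.sum_ite_eq]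

lemma fwd_v2 (hqj0 : q j0 = 0) (s : Fin d) :
    (fun r => if r = j0.castSucc then (1:ℝ) else 0) ᵥ* fwdM ℓ lam q j0 (Sum.inr s) = 0 := by
  funext c
  simp [Matrix.vecMul, dotProduct, fwdM, ite_mul, Finset.sum_ite_eq,
    qE_castSucc, hqj0]

lemma fwd_v3 (i i' : {j : Fin k // j ≠ 0}) :
    lamE ℓ (lam i) j0 ᵥ* fwdM ℓ lam q j0 (Sum.inl i') = 0 := by
  funext c
  simp only [Matrix.vecMul, dotProduct, fwdM, Matrix.of_apply, mul_ite, mul_zero,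
    Pi.zero_apply, Finset.sum_ite_eq']
  simp [lamE_castSucc]

lemma fwd_v4 (hqj0 : q j0 = 0) (i : {j : Fin k // j ≠ 0}) (s : Fin d) :
    lamE ℓ (lam i) j0 ᵥ* fwdM ℓ lam q j0 (Sum.inr s)
      = (∑ j, lam i j * q j s) • (fun r => if r = Fin.last ℓ then (1:ℝ) else 0) := by
  funext c
  simp only [Matrix.vecMul, dotProduct, fwdM, Matrix.of_apply, mul_ite, mul_zero,
    Pi.smul_apply, smul_eq_mul, mul_ite, mul_one]
  by_cases hc : c = Fin.last ℓ <;> simp [hc]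
  rw [Fin.sum_univ_castSucc]
  simp only [lamE_castSucc, qE_castSucc, qE_last, lamE_last, mul_zero, zero_mul, add_zero]
  apply Finset.sum_congr rfl
  intro j _
  by_cases hj : j = j0 <;> simp [hj, hqj0]

lemma fwd_v5 (a : {j : Fin k // j ≠ 0} ⊕ Fin d) :
    (fun r => if r = Fin.last ℓ then (1:ℝ) else 0) ᵥ* fwdM ℓ lam q j0 a = 0 := by
  funext c
  cases a <;>
    simp only [Matrix.vecMul, dotProduct, fwdM, Matrix.of_apply, ite_mul, one_mul,
      zero_mul, Finset.sum_ite_eq', Finset.mem_univ, if_true, Pi.zero_apply]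
  · exact if_neg (Fin.castSucc_lt_last j0).ne'
  · split <;> simp [qE_last]

end fwd
section bounds
variable {ℓ d : ℕ}

lemma lamE_nonneg {lam : Fin ℓ → ℝ} (h : ∀ j, 0 ≤ lam j) (j0 : Fin ℓ) (c : Fin (ℓ+1)) :
    0 ≤ lamE ℓ lam j0 c := by
  dsimp [lamE]
  split
  · split
    · exact le_rfl
    · exact h _
  · exact le_rfl

lemma lamE_sum {lam : Fin ℓ → ℝ} (h : ∀ j, 0 ≤ lam j) (j0 : Fin ℓ) :
    ∑ c, lamE ℓ lam j0 c ≤ ∑ j, lam j := by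
  rw [Fin.sum_univ_castSucc]
  simp only [lamE_castSucc, lamE_last, add_zero]
  apply Finset.sum_le_sum
  intro j _
  split
  · exact h j
  · exact le_rfl

lemma qE_nonneg {q : Fin ℓ → Fin d → ℝ} (h : ∀ j s, 0 ≤ q j s) (c : Fin (ℓ+1)) (s : Fin d) :
    0 ≤ qE ℓ q c s := by
  dsimp [qE]; split
  · exact h _ _
  · exact le_rfl

lemma qE_le {q : Fin ℓ → Fin d → ℝ} (h : ∀ j s, q j s ≤ 1) (c : Fin (ℓ+1)) (s : Fin d) :
    qE ℓ q c s ≤ 1 := by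
  dsimp [qE]; split
  · exact h _ _
  · norm_num
end bounds

/-- reduction from the restricted hypercube problem to PA
minimisation. There is a set `Q ⊆ [0,1]^d` of at most `ℓ` points with
`P ⊆ conv(Q)` iff there is a PA with `ℓ+1` states equivalent to the PA `A`
constructed from `P = {p₁, …, p_k}` (with `p₁` the origin). -/
theorem hypercube_reduces_to_PA_minimisation {k d : ℕ} [NeZero k]
    (p : Fin k → Fin d → ℝ)
    (hp : ∀ i s, p i s ∈ Set.Icc (0 : ℝ) 1)
    (hp0 : p 0 = 0)
    (ℓ : ℕ) (hℓ : 1 ≤ ℓ) :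
    (∃ q : Fin ℓ → Fin d → ℝ,
      (∀ j s, q j s ∈ Set.Icc (0 : ℝ) 1) ∧
      (∀ i, p i ∈ convexHull ℝ (Set.range q))) ↔
    (∃ (M' : ({j : Fin k // j ≠ 0} ⊕ Fin d) → Matrix (Fin (ℓ + 1)) (Fin (ℓ + 1)) ℝ)
       (α' η' : Fin (ℓ + 1) → ℝ),
      -- `A'` is a PA:
      (∀ i, 0 ≤ α' i) ∧ (∑ i, α' i) ≤ 1 ∧
      (∀ a i j, 0 ≤ M' a i j) ∧ (∀ a i, (∑ j, M' a i j) ≤ 1) ∧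
      (∀ i, η' i ∈ Set.Icc (0 : ℝ) 1) ∧
      -- `A'` is equivalent to `A`:
      (∀ w, WAlang M' α' η' w =
        WAlang (cubeM k d p)
          (fun r => if r = some 0 then 1 else 0)
          (fun r => if r = none then 1 else 0) w)) := by
  constructor
  · rintro ⟨q, hq, hconv⟩
    choose lam hlam0 hlam1 hlamc using fun i => aux_extract q (hconv i)
    have hj0ex : ∃ j0, 0 < lam 0 j0 := by
      by_contra h
      push_neg at h
      have h0 : ∑ j, lam 0 j = 0 :=
        Finset.sum_eq_zero fun j _ => le_antisymm (h j) (hlam0 0 j)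
      exact one_ne_zero ((hlam1 0).symm.trans h0)
    obtain ⟨j0, hj0⟩ := hj0ex
    have hqj0 : q j0 = 0 := by
      funext s
      have hs : ∑ j, lam 0 j * q j s = 0 := by
        have h1 := congrFun (hlamc 0) s
        have h2 := congrFun hp0 s
        simp only [Finset.sum_apply, Pi.smul_apply, smul_eq_mul, Pi.zero_apply] at h1 h2
        exact h1.trans h2
      have h3 := (Finset.sum_eq_zero_iff_of_nonneg
        (fun j _ => mul_nonneg (hlam0 0 j) (hq j s).1)).1 hs j0 (Finset.mem_univ _)
      have h4 := (mul_eq_zero.1 h3).resolve_left (ne_of_gt hj0)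
      simpa using h4
    refine ⟨fwdM ℓ (fun i => lam i.1) q j0,
      (fun r => if r = j0.castSucc then 1 else 0),
      (fun r => if r = Fin.last ℓ then 1 else 0), ?_, ?_, ?_, ?_, ?_, ?_⟩
    · intro r; dsimp only; split <;> norm_num
    · simp
    · rintro (i | s) r c <;> simp only [fwdM, Matrix.of_apply]
      · split
        · exact lamE_nonneg (fun j => hlam0 i.1 j) j0 c
        · exact le_rfl
      · split
        · exact qE_nonneg (fun j s => (hq j s).1) r s
        · exact le_rfl
    · rintro (i | s) r
      · by_cases hr : r = j0.castSucc
        · simp only [fwdM, Matrix.of_apply, hr, if_true]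
          calc ∑ c, lamE ℓ (lam i.1) j0 c ≤ ∑ j, lam i.1 j :=
                lamE_sum (fun j => hlam0 i.1 j) j0
            _ = 1 := hlam1 i.1
        · simp [fwdM, hr]
      · simp only [fwdM, Matrix.of_apply, Finset.sum_ite_eq', Finset.mem_univ, if_true]
        exact qE_le (fun j s => (hq j s).2) r s
    · intro r; dsimp only; split <;> norm_num
    · intro w
      rcases w with _ | ⟨x, _ | ⟨y, t⟩⟩
      · rw [WAlang_nil, WAlang_nil, dot_ind, dot_ind]
        simp [(Fin.castSucc_lt_last j0).ne']
      · rw [WAlang_cons, WAlang_nil, WAlang_cons, WAlang_nil]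
        rcases x with i | s
        · rw [fwd_v1, cube_v1, dot_ind, dot_ind]
          simp [lamE_last]
        · rw [fwd_v2 (fun i => lam i.1) q j0 hqj0, cube_v2]
          simp [smul_dotProduct, dot_ind, hp0]
      · rw [WAlang_cons, WAlang_cons, WAlang_cons, WAlang_cons]
        rcases x with i | s
        · rw [fwd_v1, cube_v1]
          rcases y with i' | s
          · rw [fwd_v3 (fun i => lam i.1) q j0 i i', cube_v3, WAlang_zero, WAlang_zero]
          · rw [fwd_v4 (fun i => lam i.1) q j0 hqj0 i s, cube_v4]
            have hps : ∑ j, lam i.1 j * q j s = p i.1 s := by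
              have h1 := congrFun (hlamc i.1) s
              simpa [Finset.sum_apply] using h1
            rw [hps, WAlang_smul, WAlang_smul]
            congr 1
            rcases t with _ | ⟨z, t'⟩
            · rw [WAlang_nil, WAlang_nil, dot_ind, dot_ind]; simp
            · rw [WAlang_cons, WAlang_cons, fwd_v5, cube_v5, WAlang_zero, WAlang_zero]
        · rw [fwd_v2 (fun i => lam i.1) q j0 hqj0, cube_v2, hp0]
          simp [WAlang_zero]
  · rintro ⟨M', α', η', hα0, hα1, hM0, hM1, hη, heq⟩
    -- value of the cube automaton on the relevant words
    have LAnil : WAlang (cubeM k d p)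
        (fun r => if r = some 0 then 1 else 0) (fun r => if r = none then 1 else 0) [] = 0 := by
      rw [WAlang_nil, dot_ind]; simp
    have LAb : ∀ s : Fin d, WAlang (cubeM k d p)
        (fun r => if r = some 0 then 1 else 0) (fun r => if r = none then 1 else 0)
        [Sum.inr s] = p 0 s := by
      intro s
      rw [WAlang_cons, WAlang_nil, cube_v2]
      simp [smul_dotProduct, dot_ind]
    have LAab : ∀ (i : {j : Fin k // j ≠ 0}) (s : Fin d), WAlang (cubeM k d p)
        (fun r => if r = some 0 then 1 else 0) (fun r => if r = none then 1 else 0)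
        [Sum.inl i, Sum.inr s] = p i.1 s := by
      intro i s
      rw [WAlang_cons, WAlang_cons, WAlang_nil, cube_v1, cube_v4]
      simp [smul_dotProduct, dot_ind]
    have LAabb : ∀ (i : {j : Fin k // j ≠ 0}) (s t : Fin d), WAlang (cubeM k d p)
        (fun r => if r = some 0 then 1 else 0) (fun r => if r = none then 1 else 0)
        [Sum.inl i, Sum.inr s, Sum.inr t] = 0 := by
      intro i s t
      rw [WAlang_cons, WAlang_cons, cube_v1, cube_v4, WAlang_smul, WAlang_cons,
        WAlang_nil, cube_v5]
      simp
    set v : Fin (ℓ+1) → Fin d → ℝ := fun r s => (M' (Sum.inr s) *ᵥ η') r with hv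
    have hv0 : ∀ r s, 0 ≤ v r s := by
      intro r s
      simp only [hv, Matrix.mulVec, dotProduct]
      exact Finset.sum_nonneg fun c _ => mul_nonneg (hM0 _ _ _) (hη c).1
    have hv1 : ∀ r s, v r s ≤ 1 := by
      intro r s
      simp only [hv, Matrix.mulVec, dotProduct]
      calc ∑ c, M' (Sum.inr s) r c * η' c ≤ ∑ c, M' (Sum.inr s) r c := by
            apply Finset.sum_le_sum
            intro c _
            exact mul_le_of_le_one_right (hM0 _ _ _) (hη c).2
        _ ≤ 1 := hM1 _ r
    have h0 : ∑ r, α' r * η' r = 0 := by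
      have h := (heq []).trans LAnil
      rw [WAlang_nil] at h
      simpa [dotProduct] using h
    have hb : ∀ s, ∑ r, α' r * v r s = p 0 s := by
      intro s
      have h := (heq [Sum.inr s]).trans (LAb s)
      rw [WAlang_cons, WAlang_nil, ← Matrix.dotProduct_mulVec] at h
      simpa [dotProduct, hv] using h
    have hab : ∀ (i : {j : Fin k // j ≠ 0}) (s : Fin d),
        ∑ r, (α' ᵥ* M' (Sum.inl i)) r * v r s = p i.1 s := by
      intro i s
      have h := (heq [Sum.inl i, Sum.inr s]).trans (LAab i s)
      rw [WAlang_cons, WAlang_cons, WAlang_nil, ← Matrix.dotProduct_mulVec] at h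
      simpa [dotProduct, hv] using h
    have habb : ∀ (i : {j : Fin k // j ≠ 0}) (s t : Fin d),
        ∑ r, ((α' ᵥ* M' (Sum.inl i)) ᵥ* M' (Sum.inr s)) r * v r t = 0 := by
      intro i s t
      have h := (heq [Sum.inl i, Sum.inr s, Sum.inr t]).trans (LAabb i s t)
      rw [WAlang_cons, WAlang_cons, WAlang_cons, WAlang_nil,
        ← Matrix.dotProduct_mulVec] at h
      simpa [dotProduct, hv] using h
    have huu0 : ∀ (a : {j : Fin k // j ≠ 0} ⊕ Fin d) (r : Fin (ℓ+1)),
        0 ≤ (α' ᵥ* M' a) r := by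
      intro a r
      simp only [Matrix.vecMul, dotProduct]
      exact Finset.sum_nonneg fun r' _ => mul_nonneg (hα0 r') (hM0 _ _ _)
    have huu1 : ∀ (a : {j : Fin k // j ≠ 0} ⊕ Fin d), ∑ r, (α' ᵥ* M' a) r ≤ 1 := by
      intro a
      simp only [Matrix.vecMul, dotProduct]
      rw [Finset.sum_comm]
      calc ∑ r, ∑ c, α' r * M' a r c = ∑ r, α' r * ∑ c, M' a r c := by
            simp [Finset.mul_sum]
        _ ≤ ∑ r, α' r * 1 := by
            apply Finset.sum_le_sum
            intro r _
            exact mul_le_mul_of_nonneg_left (hM1 a r) (hα0 r)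
        _ ≤ 1 := by simpa using hα1
    by_cases hPz : ∀ i s, p i s = 0
    · refine ⟨fun _ _ => 0, fun j s => ⟨le_rfl, zero_le_one⟩, fun i => ?_⟩
      have hpi : p i = 0 := funext fun s => hPz i s
      rw [hpi]
      exact subset_convexHull ℝ _ ⟨⟨0, hℓ⟩, rfl⟩
    · push_neg at hPz
      obtain ⟨i0, s0, hps0⟩ := hPz
      have hi0 : i0 ≠ 0 := by
        rintro rfl
        rw [hp0] at hps0
        exact hps0 rfl
      have hα'ne : ∃ r0, 0 < α' r0 := by
        by_contra h
        push_neg at h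
        have hz : α' = 0 := funext fun r => le_antisymm (h r) (hα0 r)
        apply hps0
        have h2 := hab ⟨i0, hi0⟩ s0
        rw [hz] at h2
        simpa [Matrix.vecMul, dotProduct] using h2.symm
      obtain ⟨r0, hr0⟩ := hα'ne
      have hvr0 : ∀ s, v r0 s = 0 := by
        intro s
        have hsum : ∑ r, α' r * v r s = 0 := by
          rw [hb s, hp0]
          rfl
        have h3 := (Finset.sum_eq_zero_iff_of_nonneg
          (fun r _ => mul_nonneg (hα0 r) (hv0 r s))).1 hsum r0 (Finset.mem_univ _)
        exact (mul_eq_zero.1 h3).resolve_left hr0.ne'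
      have hηr0 : η' r0 = 0 := by
        have h3 := (Finset.sum_eq_zero_iff_of_nonneg
          (fun r _ => mul_nonneg (hα0 r) (hη r).1)).1 h0 r0 (Finset.mem_univ _)
        exact (mul_eq_zero.1 h3).resolve_left hr0.ne'
      have hr1ex : ∃ r1, r1 ≠ r0 ∧ ∀ s, v r1 s = 0 := by
        by_contra hcon
        push_neg at hcon
        have hne : ∑ r, (α' ᵥ* M' (Sum.inl ⟨i0, hi0⟩)) r * v r s0 ≠ 0 := by
          rw [hab ⟨i0, hi0⟩ s0]
          exact hps0
        obtain ⟨r', -, hr'⟩ := Finset.exists_ne_zero_of_sum_ne_zero hne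
        have hur' : 0 < (α' ᵥ* M' (Sum.inl ⟨i0, hi0⟩)) r' :=
          lt_of_le_of_ne (huu0 _ _) (Ne.symm (left_ne_zero_of_mul hr'))
        have hvr' : v r' s0 ≠ 0 := right_ne_zero_of_mul hr'
        have hr'ne : r' ≠ r0 := by
          rintro rfl
          exact hvr' (hvr0 s0)
        apply hvr'
        have step1 : ∀ (s : Fin d) (c : Fin (ℓ+1)), c ≠ r0 →
            ((α' ᵥ* M' (Sum.inl ⟨i0, hi0⟩)) ᵥ* M' (Sum.inr s)) c = 0 := by
          intro s c hc
          obtain ⟨t, hvt⟩ := hcon c hc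
          have hnn : ∀ c' : Fin (ℓ+1),
              0 ≤ ((α' ᵥ* M' (Sum.inl ⟨i0, hi0⟩)) ᵥ* M' (Sum.inr s)) c' := by
            intro c'
            simp only [Matrix.vecMul, dotProduct]
            exact Finset.sum_nonneg fun r _ => mul_nonneg (huu0 _ r) (hM0 _ _ _)
          have hterm := (Finset.sum_eq_zero_iff_of_nonneg
            (fun c' _ => mul_nonneg (hnn c') (hv0 c' t))).1
            (habb ⟨i0, hi0⟩ s t) c (Finset.mem_univ _)
          exact (mul_eq_zero.1 hterm).resolve_right hvt
        have step2 : ∀ (s : Fin d) (c : Fin (ℓ+1)), c ≠ r0 → M' (Sum.inr s) r' c = 0 := by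
          intro s c hc
          have h1 := step1 s c hc
          simp only [Matrix.vecMul, dotProduct] at h1
          have hterm := (Finset.sum_eq_zero_iff_of_nonneg
            (fun r _ => mul_nonneg (huu0 _ r) (hM0 _ r c))).1 h1 r' (Finset.mem_univ _)
          exact (mul_eq_zero.1 hterm).resolve_left hur'.ne'
        simp only [hv, Matrix.mulVec, dotProduct]
        apply Finset.sum_eq_zero
        intro c _
        by_cases hc : c = r0
        · rw [hc, hηr0, mul_zero]
        · rw [step2 s0 c hc, zero_mul]
      obtain ⟨r1, hr1ne, hvr1⟩ := hr1ex
      obtain ⟨jstar, hjstar⟩ := Fin.exists_succAbove_eq hr1ne.symm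
      refine ⟨fun j => v (r1.succAbove j), fun j s => ⟨hv0 _ _, hv1 _ _⟩, ?_⟩
      intro i
      have hu : ∃ u : Fin (ℓ+1) → ℝ, (∀ r, 0 ≤ u r) ∧ (∑ r, u r ≤ 1) ∧
          (∀ s, ∑ r, u r * v r s = p i s) := by
        by_cases hi : i = 0
        · exact ⟨α', hα0, hα1, fun s => by rw [hb s, hi]⟩
        · exact ⟨α' ᵥ* M' (Sum.inl ⟨i, hi⟩), huu0 _, huu1 _, fun s => hab ⟨i, hi⟩ s⟩
      obtain ⟨u, hu0, hu1, hup⟩ := hu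
      have hsplit : ∑ r, u r = u r1 + ∑ j, u (r1.succAbove j) :=
        Fin.sum_univ_succAbove u r1
      have hcnn : 0 ≤ 1 - ∑ j, u (r1.succAbove j) := by
        have := hu0 r1
        linarith [hu1, hsplit.symm]
      have hw0 : ∀ j, 0 ≤ u (r1.succAbove j) +
          (if j = jstar then 1 - ∑ j', u (r1.succAbove j') else 0) := by
        intro j
        apply add_nonneg (hu0 _)
        split
        · exact hcnn
        · exact le_rfl
      have hw1 : ∑ j, (u (r1.succAbove j) +
          (if j = jstar then 1 - ∑ j', u (r1.succAbove j') else 0)) = 1 := by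
        rw [Finset.sum_add_distrib, Finset.sum_ite_eq' Finset.univ jstar]
        simp
      have hmem := aux_mem (fun j => v (r1.succAbove j))
        (fun j => u (r1.succAbove j) +
          (if j = jstar then 1 - ∑ j', u (r1.succAbove j') else 0)) hw0 hw1
      have hrepr : (∑ j, (u (r1.succAbove j) +
          (if j = jstar then 1 - ∑ j', u (r1.succAbove j') else 0)) •
            v (r1.succAbove j)) = p i := by
        funext s
        simp only [Finset.sum_apply, Pi.smul_apply, smul_eq_mul, add_mul, ite_mul, zero_mul]
        rw [Finset.sum_add_distrib, Finset.sum_ite_eq' Finset.univ jstar]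
        simp only [Finset.mem_univ, if_true, hjstar]
        rw [show v r0 s = 0 from hvr0 s, mul_zero, add_zero]
        have h5 := Fin.sum_univ_succAbove (fun r => u r * v r s) r1
        simp only [hvr1 s, mul_zero, zero_add, hup s] at h5
        exact h5.symm
      rw [← hrepr]
      exact hmem
end
end

section
/- Let φ = c₁ ∧ … ∧ c_M be a 3CNF formula over variables x₁, …, x_N, where each clause c_j = l_{j,1} ∨ l_{j,2} ∨ l_{j,3} consists of three literals (each literal being a variable x_i taken positively, written x_i⁺, or negatively, written x_i⁻), no clause appears twice in φ, and no variable appears twice in the same clause. Let D = {x̄_i, y_i, z_i : i ∈ {1,…,N}} ∪ {c̄_j : j ∈ {1,…,M}} be a set of d = 3N + M coordinates, and for u ∈ D let e(u) ∈ {0,1}^D be the corresponding standard basis vector. Define f(x_i⁻) = e(y_i) and f(x_i⁺) = e(y_i) + e(z_i). Define P_var = {e(x̄_i) + f(x_i⁻), e(x̄_i) + f(x_i⁺) : i ∈ {1,…,N}}, P_cla = {e(c̄_j) + f(l_{j,k}) : j ∈ {1,…,M}, k ∈ {1,2,3}}, p(x_i) = ½e(x̄_i) + e(y_i) + ½e(z_i)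 for each i, p(c_j) = ⅔e(c̄_j) + ⅓f(l_{j,1}) + ⅓f(l_{j,2}) + ⅓f(l_{j,3}) for each j, and P = P_var ∪ P_cla ∪ {p(x₁),…,p(x_N), p(c₁),…,p(c_M)} ⊆ [0,1]^D. Then φ is satisfiable if and only if there exists a set Q ⊆ [0,1]^D with |Q| ≤ 3N + 3M and P ⊆ conv(Q). -/
/-!
The 0/1 points of `P` are vertices of the cube, so a cover `Q` contains all `2N + 3M` of them and
at most `N` further points. Writing `p(x_i)` as a convex combination of `Q` uses, besides vertices,
a point `r_i` with `y_i = 1` lying on every facet of the cube through `p(x_i)`; the `r_i` are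
distinct, hence they are the rest of `Q`, and `σ i := (r_i (z_i) = 1)` is the assignment.
A combination for `p(c_j)` must use some `r_i`, with `x_i` occurring in `c_j`; since `z ≤ y` on
all of `Q`, the facets through `p(c_j)` and the hyperplane `y_i = z_i` (when `x_i⁺` occurs) force
`r_i` to make that literal true. Conversely, for a satisfying `σ` the vertices together with the
points `f(x_i^{σ i})` form a cover.
-/

open Matrix

noncomputable section

/-- The coordinate set `D`: `Sum.inl (0, i) = x̄_i`, `Sum.inl (1, i) = y_i`,
`Sum.inl (2, i) = z_i`, and `Sum.inr j = c̄_j`. -/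
abbrev SatCoord (N Mn : ℕ) := (Fin 3 × Fin N) ⊕ Fin Mn

/-- The standard basis vector `e(u)` of the coordinate `u`. -/
def satE {N Mn : ℕ} (u : SatCoord N Mn) : SatCoord N Mn → ℝ :=
  Pi.single u 1

/-- `f(x_i⁻) = e(y_i)` and `f(x_i⁺) = e(y_i) + e(z_i)`.
A literal is a pair `(i, b)` with `b = true` for the positive literal `x_i⁺`. -/
def litVec {N Mn : ℕ} (l : Fin N × Bool) : SatCoord N Mn → ℝ :=
  if l.2 then satE (Sum.inl (1, l.1)) + satE (Sum.inl (2, l.1))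
  else satE (Sum.inl (1, l.1))

/-- The point set `P = P_var ∪ P_cla ∪ {p(x_i)} ∪ {p(c_j)}` of the reduction. -/
def satP (N Mn : ℕ) (lit : Fin Mn → Fin 3 → Fin N × Bool) : Set (SatCoord N Mn → ℝ) :=
  (⋃ i : Fin N,
    {satE (Sum.inl (0, i)) + litVec (i, false),
     satE (Sum.inl (0, i)) + litVec (i, true)}) ∪
  (⋃ j : Fin Mn, ⋃ k : Fin 3,
    {satE (Sum.inr j) + litVec (lit j k)}) ∪
  (Set.range fun i : Fin N =>
    (1 / 2 : ℝ) • satE (Sum.inl (0, i)) + satE (Sum.inl (1, i)) +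
      (1 / 2 : ℝ) • satE (Sum.inl (2, i))) ∪
  (Set.range fun j : Fin Mn =>
    (2 / 3 : ℝ) • satE (Sum.inr j) +
      (1 / 3 : ℝ) • (litVec (lit j 0) + litVec (lit j 1) + litVec (lit j 2)))

open Finset in
theorem mem_convexHull_sep_of_isMinOn {E κ : Type*} [AddCommGroup E] [Module ℝ E]
    {s : Set E} {x : E} (ℓ : κ → E →ₗ[ℝ] ℝ) (hmin : ∀ k, IsMinOn (ℓ k) s x)
    (hx : x ∈ convexHull ℝ s) : x ∈ convexHull ℝ {y ∈ s | ∀ k, ℓ k y = ℓ k x} := by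
  obtain ⟨ι, _, w, z, hw₀, hw₁, hz, rfl⟩ := mem_convexHull_iff_exists_fintype.1 hx
  set x := ∑ i, w i • z i
  have hface : ∀ i, w i ≠ 0 → ∀ k, ℓ k (z i) = ℓ k x := by
    intro i hi k
    have hgaps : ∑ i, w i * (ℓ k (z i) - ℓ k x) = 0 := by
      simp only [x, mul_sub, sum_sub_distrib, ← sum_mul, hw₁, one_mul, map_sum, map_smul,
        smul_eq_mul, sub_self]
    have hgap := (sum_eq_zero_iff_of_nonneg fun i _ => mul_nonneg (hw₀ i)
      (sub_nonneg.2 (isMinOn_iff.1 (hmin k) _ (hz i)))).1 hgaps i (mem_univ _)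
    exact sub_eq_zero.1 ((mul_eq_zero.1 hgap).resolve_left hi)
  have hx : x = ∑ i ∈ univ.filter (w · ≠ 0), w i • z i :=
    (sum_filter_of_ne fun i _ h => left_ne_zero_of_smul h).symm
  have hsum : ∑ i ∈ univ.filter (w · ≠ 0), w i = 1 := by rw [sum_filter_ne_zero, hw₁]
  have key := (convex_convexHull ℝ {y ∈ s | ∀ k, ℓ k y = ℓ k x}).sum_mem (fun i _ => hw₀ i)
    hsum fun i hi => subset_convexHull ℝ _ ⟨hz i, hface i (mem_filter.1 hi).2⟩
  rwa [← hx] at key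

theorem mem_convexHull_cubeFace {ι : Type*} {Q : Set (ι → ℝ)} {p : ι → ℝ}
    (hQ : ∀ q ∈ Q, ∀ u, q u ∈ Set.Icc (0 : ℝ) 1) (hp : p ∈ convexHull ℝ Q) :
    p ∈ convexHull ℝ {q ∈ Q | ∀ u, p u = 0 ∨ p u = 1 → q u = p u} := by
  -- `p` minimizes `q ↦ ± q u` over the cube in each coordinate where it is `0` or `1`
  let sgn : ι → ℝ := fun u => if p u = 0 then 1 else if p u = 1 then -1 else 0
  refine convexHull_mono ?_ (mem_convexHull_sep_of_isMinOn (fun u => sgn u • LinearMap.proj u)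
    (fun u => isMinOn_iff.2 fun q hq => ?_) hp)
  · rintro q ⟨hq, hqp⟩
    refine ⟨hq, fun u hu => ?_⟩
    have := hqp u
    rcases hu with h | h <;> simp_all [sgn]
  · have := hQ q hq u
    simp only [sgn, LinearMap.smul_apply, LinearMap.proj_apply, smul_eq_mul]
    split_ifs <;> simp_all

theorem mem_of_mem_convexHull_of_forall_eq_zero_or_one {ι : Type*} {Q : Set (ι → ℝ)}
    {p : ι → ℝ} (hQ : ∀ q ∈ Q, ∀ u, q u ∈ Set.Icc (0 : ℝ) 1) (hp01 : ∀ u, p u = 0 ∨ p u = 1)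
    (hp : p ∈ convexHull ℝ Q) : p ∈ Q := by
  obtain ⟨q, hq, hqp⟩ := convexHull_nonempty_iff.1 ⟨p, mem_convexHull_cubeFace hQ hp⟩
  rwa [← funext fun u => hqp u (hp01 u)]

theorem exists_mem_apply_ne_of_mem_convexHull {ι : Type*} {s : Set (ι → ℝ)} {p : ι → ℝ}
    {u : ι} {c : ℝ} (hp : p ∈ convexHull ℝ s) (hpu : p u ≠ c) : ∃ q ∈ s, q u ≠ c := by
  by_contra! h
  exact hpu (convexHull_min h (convex_hyperplane (f := fun q : ι → ℝ => q u)
    (LinearMap.proj u).isLinear c) hp)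

theorem range_eq_of_injective_of_card_le {α E : Type*} [Fintype α] {Q : Finset E} {f : α → E}
    (hf : Function.Injective f) (hfQ : ∀ a, f a ∈ Q) (hQ : Q.card ≤ Fintype.card α) :
    Set.range f = Q := by
  classical
  have hQ : Finset.univ.image f = Q := Finset.eq_of_subset_of_card_le
    (Finset.image_subset_iff.2 fun a _ => hfQ a)
    (by rwa [Finset.card_image_of_injective _ hf, Finset.card_univ])
  rw [← hQ, Finset.coe_image, Finset.coe_univ, Set.image_univ]

section Reduction

variable {N Mn : ℕ} {lit : Fin Mn → Fin 3 → Fin N × Bool}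

@[simp]
theorem satE_apply (u v : SatCoord N Mn) : satE u v = if v = u then 1 else 0 :=
  Pi.single_apply u 1 v

@[simp]
theorem litVec_apply_x (l : Fin N × Bool) (i : Fin N) : litVec (Mn := Mn) l (.inl (0, i)) = 0 := by
  obtain ⟨i', _ | _⟩ := l <;> simp [litVec]

@[simp]
theorem litVec_apply_y (l : Fin N × Bool) (i : Fin N) :
    litVec (Mn := Mn) l (.inl (1, i)) = if l.1 = i then 1 else 0 := by
  obtain ⟨i', _ | _⟩ := l <;> simp [litVec, @eq_comm _ i]

@[simp]
theorem litVec_apply_z (l : Fin N × Bool) (i : Fin N) :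
    litVec (Mn := Mn) l (.inl (2, i)) = if l.1 = i ∧ l.2 then 1 else 0 := by
  obtain ⟨i', _ | _⟩ := l <;> simp [litVec, @eq_comm _ i]

@[simp]
theorem litVec_apply_c (l : Fin N × Bool) (j : Fin Mn) : litVec l (.inr j) = 0 := by
  obtain ⟨i', _ | _⟩ := l <;> simp [litVec]

theorem litVec_apply_eq_zero_or_one (l : Fin N × Bool) (u : SatCoord N Mn) :
    litVec l u = 0 ∨ litVec l u = 1 := by
  rcases u with ⟨t, i⟩ | j
  · fin_cases t <;> simp [em']
    cases l.2 <;> simp [em']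
  · simp

-- The 0/1 points `P_var ∪ P_cla`, indexed by literals `(i, b)` and clause positions `(j, k)`.
def satVertex (lit : Fin Mn → Fin 3 → Fin N × Bool) :
    (Fin N × Bool) ⊕ (Fin Mn × Fin 3) → SatCoord N Mn → ℝ
  | .inl l => satE (.inl (0, l.1)) + litVec l
  | .inr (j, k) => satE (.inr j) + litVec (lit j k)

-- `p(x_i)`
def varCenter (N Mn : ℕ) (i : Fin N) : SatCoord N Mn → ℝ :=
  (1 / 2 : ℝ) • satE (.inl (0, i)) + satE (.inl (1, i)) + (1 / 2 : ℝ) • satE (.inl (2, i))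

-- `p(c_j)`
def clauseCenter (lit : Fin Mn → Fin 3 → Fin N × Bool) (j : Fin Mn) : SatCoord N Mn → ℝ :=
  (2 / 3 : ℝ) • satE (.inr j) + (1 / 3 : ℝ) • ∑ k, litVec (lit j k)

theorem satP_eq : satP N Mn lit =
    Set.range (satVertex lit) ∪ Set.range (varCenter N Mn) ∪ Set.range (clauseCenter lit) := by
  ext p
  simp [satP, satVertex, varCenter, clauseCenter, Fin.sum_univ_three, smul_add, eq_comm]

theorem satVertex_apply_eq_zero_or_one (s : (Fin N × Bool) ⊕ (Fin Mn × Fin 3))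
    (u : SatCoord N Mn) : satVertex lit s u = 0 ∨ satVertex lit s u = 1 := by
  rcases s with ⟨i, _ | _⟩ | ⟨j, k⟩ <;> rcases u with ⟨t, i'⟩ | j'
  all_goals try fin_cases t
  all_goals simp [satVertex, em']
  cases (lit j k).2 <;> simp [em']

theorem fst_lit_eq_iff (hvar : ∀ j, ∀ k₁ k₂ : Fin 3, k₁ ≠ k₂ → (lit j k₁).1 ≠ (lit j k₂).1)
    {j : Fin Mn} {k₁ k₂ : Fin 3} : (lit j k₁).1 = (lit j k₂).1 ↔ k₁ = k₂ :=
  ⟨fun h => by_contra (hvar j k₁ k₂ · h), fun h => h ▸ rfl⟩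

theorem satVertex_injective
    (hvar : ∀ j, ∀ k₁ k₂ : Fin 3, k₁ ≠ k₂ → (lit j k₁).1 ≠ (lit j k₂).1) :
    Function.Injective (satVertex lit) := by
  rintro (⟨i, b⟩ | ⟨j, k⟩) (⟨i', b'⟩ | ⟨j', k'⟩) h
  · obtain rfl : i = i' := by simpa [satVertex] using congrFun h (.inl (0, i))
    have hz := congrFun h (.inl (2, i))
    cases b <;> cases b' <;> simp [satVertex] at hz ⊢
  · simpa [satVertex] using congrFun h (.inl (0, i))
  · simpa [satVertex] using congrFun h (.inl (0, i'))
  · obtain rfl : j = j' := by simpa [satVertex, eq_comm] using congrFun h (.inr j)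
    have hy : (lit j k').1 = (lit j k).1 := by
      simpa [satVertex] using congrFun h (.inl (1, (lit j k).1))
    rw [(fst_lit_eq_iff hvar).1 hy]

theorem notMem_range_satVertex {q : SatCoord N Mn → ℝ} (hx : ∀ i, q (.inl (0, i)) ≠ 1)
    (hc : ∀ j, q (.inr j) ≠ 1) : q ∉ Set.range (satVertex lit) := by
  rintro ⟨⟨i, b⟩ | ⟨j, k⟩, rfl⟩
  · exact hx i (by simp [satVertex])
  · exact hc j (by simp [satVertex])

theorem varCenter_eq_midpoint (i : Fin N) (b : Bool) : varCenter N Mn i =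
    (1 / 2 : ℝ) • satVertex lit (.inl (i, !b)) + (1 / 2 : ℝ) • litVec (i, b) := by
  cases b <;> simp [varCenter, satVertex, litVec] <;> module

theorem clauseCenter_eq_sum (j : Fin Mn) (k : Fin 3) : clauseCenter lit j =
    ∑ k', (1 / 3 : ℝ) • if k' = k then litVec (lit j k) else satVertex lit (.inr (j, k')) := by
  fin_cases k <;> simp [clauseCenter, satVertex, Fin.sum_univ_three] <;> module

open Finset in
theorem exists_cover_of_satisfiable (σ : Fin N → Bool)
    (hσ : ∀ j, ∃ k, σ (lit j k).1 = (lit j k).2) :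
    ∃ Q : Finset (SatCoord N Mn → ℝ),
      Q.card ≤ 3 * N + 3 * Mn ∧
      (∀ q ∈ Q, ∀ u, q u ∈ Set.Icc (0 : ℝ) 1) ∧
      satP N Mn lit ⊆ convexHull ℝ (Q : Set (SatCoord N Mn → ℝ)) := by
  classical
  let Q := univ.image (satVertex lit) ∪ univ.image fun i => litVec (i, σ i)
  have hV : ∀ s, satVertex lit s ∈ convexHull ℝ (Q : Set (SatCoord N Mn → ℝ)) :=
    fun s => subset_convexHull ℝ _ (by simp [Q])
  have hσQ : ∀ i, litVec (i, σ i) ∈ convexHull ℝ (Q : Set (SatCoord N Mn → ℝ)) :=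
    fun i => subset_convexHull ℝ _ (by simp [Q])
  refine ⟨Q, ?_, ?_, ?_⟩
  · calc Q.card ≤ (2 * N + 3 * Mn) + N := (card_union_le _ _).trans
          (add_le_add (card_image_le.trans (by simp [mul_comm])) (card_image_le.trans (by simp)))
      _ = 3 * N + 3 * Mn := by ring
  · intro q hq u
    simp only [Q, mem_union, mem_image, mem_univ, true_and] at hq
    obtain ⟨s, rfl⟩ | ⟨i, rfl⟩ := hq
    · rcases satVertex_apply_eq_zero_or_one (lit := lit) s u with h | h <;> simp [h]
    · rcases litVec_apply_eq_zero_or_one (i, σ i) u with h | h <;> simp [h]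
  · rw [satP_eq]
    simp only [Set.union_subset_iff, Set.range_subset_iff]
    refine ⟨⟨hV, fun i => ?_⟩, fun j => ?_⟩
    · rw [varCenter_eq_midpoint (lit := lit) i (σ i)]
      exact convex_convexHull ℝ _ (hV _) (hσQ i) (by norm_num) (by norm_num) (by norm_num)
    · obtain ⟨k, hk⟩ := hσ j
      rw [clauseCenter_eq_sum j k]
      refine (convex_convexHull ℝ _).sum_mem (fun _ _ => by norm_num) (by simp)
        fun k' _ => ?_
      split_ifs
      · rw [show lit j k = ((lit j k).1, σ (lit j k).1) by rw [hk]]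
        exact hσQ _
      · exact hV _

theorem satVertex_apply_z_le_y (s : (Fin N × Bool) ⊕ (Fin Mn × Fin 3)) (i : Fin N) :
    satVertex lit s (.inl (2, i)) ≤ satVertex lit s (.inl (1, i)) := by
  rcases s with ⟨i', b⟩ | ⟨j, k⟩ <;> simp [satVertex] <;> split_ifs <;> simp_all

theorem clauseCenter_apply_y_of_forall_ne {j : Fin Mn} {i : Fin N} (h : ∀ k, (lit j k).1 ≠ i) :
    clauseCenter lit j (.inl (1, i)) = 0 := by
  simp [clauseCenter, h]

theorem clauseCenter_apply_y
    (hvar : ∀ j, ∀ k₁ k₂ : Fin 3, k₁ ≠ k₂ → (lit j k₁).1 ≠ (lit j k₂).1) (j : Fin Mn) (k : Fin 3) :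
    clauseCenter lit j (.inl (1, (lit j k).1)) = 1 / 3 := by
  simp [clauseCenter, fst_lit_eq_iff hvar]

theorem clauseCenter_apply_z
    (hvar : ∀ j, ∀ k₁ k₂ : Fin 3, k₁ ≠ k₂ → (lit j k₁).1 ≠ (lit j k₂).1) (j : Fin Mn) (k : Fin 3) :
    clauseCenter lit j (.inl (2, (lit j k).1)) = if (lit j k).2 then 1 / 3 else 0 := by
  cases hb : (lit j k).2 <;>
    simp [clauseCenter, fst_lit_eq_iff hvar, Finset.filter_and, Finset.filter_eq', hb]

theorem exists_nonvertex_mem_face_varCenter {Q : Set (SatCoord N Mn → ℝ)}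
    (hcube : ∀ q ∈ Q, ∀ u, q u ∈ Set.Icc (0 : ℝ) 1) (hconv : satP N Mn lit ⊆ convexHull ℝ Q)
    (i : Fin N) :
    ∃ r ∈ Q, r ∉ Set.range (satVertex lit) ∧ r (.inl (1, i)) = 1 ∧
      ∀ u, varCenter N Mn i u = 0 → r u = 0 := by
  have hp : varCenter N Mn i ∈ convexHull ℝ Q :=
    hconv (by rw [satP_eq]; exact .inl (.inr ⟨i, rfl⟩))
  obtain ⟨r, ⟨hrQ, hr⟩, hrx⟩ := exists_mem_apply_ne_of_mem_convexHull
    (mem_convexHull_cubeFace hcube hp) (u := .inl (0, i)) (c := 1) (by simp [varCenter])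
  have hr0 : ∀ u, varCenter N Mn i u = 0 → r u = 0 := fun u hu => by
    simpa [hu] using hr u (.inl hu)
  refine ⟨r, hrQ, notMem_range_satVertex (fun i' => ?_) (fun j => ?_), ?_, hr0⟩
  · rcases eq_or_ne i' i with rfl | hi'
    · exact hrx
    · simp [hr0 (.inl (0, i')) (by simp [varCenter, hi'])]
  · simp [hr0 (.inr j) (by simp [varCenter])]
  · simpa [varCenter] using hr (.inl (1, i)) (by simp [varCenter])

theorem exists_nonvertex_mem_face_clauseCenter {Q : Set (SatCoord N Mn → ℝ)}
    (hcube : ∀ q ∈ Q, ∀ u, q u ∈ Set.Icc (0 : ℝ) 1) (hconv : satP N Mn lit ⊆ convexHull ℝ Q)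
    (hzy : ∀ q ∈ Q, ∀ i, q (.inl (2, i)) ≤ q (.inl (1, i))) (j : Fin Mn) :
    ∃ q ∈ Q, q ∉ Set.range (satVertex lit) ∧ (∀ u, clauseCenter lit j u = 0 → q u = 0) ∧
      ∀ i, clauseCenter lit j (.inl (1, i)) = clauseCenter lit j (.inl (2, i)) →
        q (.inl (1, i)) = q (.inl (2, i)) := by
  set p := clauseCenter lit j
  have hp : p ∈ convexHull ℝ Q := hconv (by rw [satP_eq]; exact .inr ⟨j, rfl⟩)
  -- `y_i - z_i ≥ 0` on `Q`, so it is minimized at `p` wherever it vanishes there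
  let ℓ : {i // p (.inl (1, i)) = p (.inl (2, i))} → (SatCoord N Mn → ℝ) →ₗ[ℝ] ℝ :=
    fun i => LinearMap.proj (.inl (1, i.1)) - LinearMap.proj (.inl (2, i.1))
  have hmin : ∀ i, IsMinOn (ℓ i) {q ∈ Q | ∀ u, p u = 0 ∨ p u = 1 → q u = p u} p :=
    fun i => isMinOn_iff.2 fun q hq => by simpa [ℓ, i.2] using hzy q hq.1 i
  obtain ⟨q, ⟨⟨hqQ, hq⟩, hqyz⟩, hqc⟩ := exists_mem_apply_ne_of_mem_convexHull
    (mem_convexHull_sep_of_isMinOn ℓ hmin (mem_convexHull_cubeFace hcube hp))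
    (u := .inr j) (c := 1) (by norm_num [p, clauseCenter])
  have hq0 : ∀ u, p u = 0 → q u = 0 := fun u hu => by simpa [hu] using hq u (.inl hu)
  refine ⟨q, hqQ, notMem_range_satVertex (fun i => ?_) (fun j' => ?_), hq0,
    fun i hi => sub_eq_zero.1 (by simpa [ℓ, hi] using hqyz ⟨i, hi⟩)⟩
  · simp [hq0 (.inl (0, i)) (by simp [p, clauseCenter])]
  · rcases eq_or_ne j' j with rfl | hj'
    · exact hqc
    · simp [hq0 (.inr j') (by simp [p, clauseCenter, hj'])]

theorem satisfiable_of_cover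
    (hvar : ∀ j, ∀ k₁ k₂ : Fin 3, k₁ ≠ k₂ → (lit j k₁).1 ≠ (lit j k₂).1)
    {Q : Finset (SatCoord N Mn → ℝ)} (hcard : Q.card ≤ 3 * N + 3 * Mn)
    (hcube : ∀ q ∈ Q, ∀ u, q u ∈ Set.Icc (0 : ℝ) 1)
    (hconv : satP N Mn lit ⊆ convexHull ℝ (Q : Set (SatCoord N Mn → ℝ))) :
    ∃ σ : Fin N → Bool, ∀ j, ∃ k, σ (lit j k).1 = (lit j k).2 := by
  have hV : ∀ s, satVertex lit s ∈ Q := fun s =>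
    mem_of_mem_convexHull_of_forall_eq_zero_or_one hcube (satVertex_apply_eq_zero_or_one s)
      (hconv (by rw [satP_eq]; exact .inl (.inl ⟨s, rfl⟩)))
  choose r hrQ hrV hry hr0 using
    exists_nonvertex_mem_face_varCenter (Q := (Q : Set (SatCoord N Mn → ℝ))) hcube hconv
  have hr_ne : ∀ i i', i ≠ i' → r i (.inl (1, i')) = 0 ∧ r i (.inl (2, i')) = 0 := fun i i' h =>
    ⟨hr0 i _ (by simp [varCenter, h.symm]), hr0 i _ (by simp [varCenter, h.symm])⟩
  have hr : Function.Injective r := fun i i' h => by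
    by_contra hne
    simpa [h, hry] using (hr_ne i i' hne).1
  have hQ : Set.range (Sum.elim (satVertex lit) r) = Q :=
    range_eq_of_injective_of_card_le ((satVertex_injective hvar).sumElim hr
      fun s i h => hrV i ⟨s, h⟩) (Sum.forall.2 ⟨hV, hrQ⟩) (by simp; omega)
  have hzy : ∀ q ∈ (Q : Set (SatCoord N Mn → ℝ)), ∀ i, q (.inl (2, i)) ≤ q (.inl (1, i)) := by
    rw [← hQ]
    rintro _ ⟨s | i', rfl⟩ i
    · exact satVertex_apply_z_le_y s i
    · rcases eq_or_ne i' i with rfl | h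
      · simpa [hry] using (hcube _ (hrQ i') _).2
      · simp [hr_ne i' i h]
  refine ⟨fun i => decide (r i (.inl (2, i)) = 1), fun j => ?_⟩
  obtain ⟨q, hqQ, hqV, hq0, hqyz⟩ := exists_nonvertex_mem_face_clauseCenter hcube hconv hzy j
  obtain ⟨i, rfl⟩ : ∃ i, r i = q := by
    rw [← hQ] at hqQ
    obtain ⟨s | i, rfl⟩ := hqQ
    · exact absurd ⟨s, rfl⟩ hqV
    · exact ⟨i, rfl⟩
  obtain ⟨k, rfl⟩ : ∃ k, (lit j k).1 = i := by
    by_contra! h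
    simpa [hry] using hq0 _ (clauseCenter_apply_y_of_forall_ne h)
  refine ⟨k, ?_⟩
  cases hb : (lit j k).2
  · simp [hq0 (.inl (2, (lit j k).1)) (by simp [clauseCenter_apply_z hvar, hb])]
  · have := hqyz _ (by rw [clauseCenter_apply_y hvar, clauseCenter_apply_z hvar, hb]; simp)
    simp [← this, hry]

end Reduction

theorem threeSat_iff_hypercube_general (N Mn : ℕ) (lit : Fin Mn → Fin 3 → Fin N × Bool)
    (hvar : ∀ j, ∀ k₁ k₂ : Fin 3, k₁ ≠ k₂ → (lit j k₁).1 ≠ (lit j k₂).1) :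
    (∃ σ : Fin N → Bool, ∀ j, ∃ k, σ (lit j k).1 = (lit j k).2) ↔
    (∃ Q : Finset (SatCoord N Mn → ℝ),
      Q.card ≤ 3 * N + 3 * Mn ∧
      (∀ q ∈ Q, ∀ u, q u ∈ Set.Icc (0 : ℝ) 1) ∧
      satP N Mn lit ⊆ convexHull ℝ (Q : Set (SatCoord N Mn → ℝ))) :=
  ⟨fun ⟨σ, hσ⟩ => exists_cover_of_satisfiable σ hσ,
    fun ⟨_, hcard, hcube, hconv⟩ => satisfiable_of_cover hvar hcard hcube hconv⟩

/-- the 3CNF formula `φ` (clauses `lit j = (l_{j,1}, l_{j,2}, l_{j,3})`,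
no repeated clause, no variable twice in a clause) is satisfiable iff there is a
set `Q ⊆ [0,1]^D` with `|Q| ≤ 3N + 3M` and `P ⊆ conv(Q)`. -/
theorem threeSat_iff_hypercube (N Mn : ℕ) (lit : Fin Mn → Fin 3 → Fin N × Bool)
    (hcl : Function.Injective
      (fun j => ({lit j 0, lit j 1, lit j 2} : Finset (Fin N × Bool))))
    (hvar : ∀ j, ∀ k₁ k₂ : Fin 3, k₁ ≠ k₂ → (lit j k₁).1 ≠ (lit j k₂).1) :
    (∃ σ : Fin N → Bool, ∀ j, ∃ k, σ (lit j k).1 = (lit j k).2) ↔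
    (∃ Q : Finset (SatCoord N Mn → ℝ),
      Q.card ≤ 3 * N + 3 * Mn ∧
      (∀ q ∈ Q, ∀ u, q u ∈ Set.Icc (0 : ℝ) 1) ∧
      satP N Mn lit ⊆ convexHull ℝ (Q : Set (SatCoord N Mn → ℝ))) :=
  threeSat_iff_hypercube_general N Mn lit hvar
end
end
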